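/- arXiv:1104.2690 — 3 statements merged into one kernel-verified Lean document; each statement's English description precedes it below -/
import Mathlib

section
/- Let E be a finite set of resources with non-negative, non-decreasing latency functions f_e : ℕ → ℝ, and for each e ∈ E suppose the congestion splits as n_e = a_e + b_e with a_e, b_e ∈ ℕ. Define Φ = Σ_e Σ_{j=1}^{n_e} f_e(j), Φ_F = Σ_e Σ_{j=1}^{a_e} f_e(j + b_e), and Φ_{N∖F} = Σ_e Σ_{j=1}^{b_e} f_e(j + a_e). Then Φ ≤ Φ_F + Φ_{N∖F}. -/
open Finset

theorem Finset.sum_Icc_one_add {M : Type*} [AddCommMonoid M] (g : ℕ → M) (a b : ℕ) :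
    ∑ j ∈ Icc 1 (a + b), g j = ∑ j ∈ Icc 1 a, g j + ∑ j ∈ Icc 1 b, g (j + a) := by
  induction b with
  | zero => simp
  | succ b ih =>
    rw [← add_assoc, sum_Icc_succ_top (by omega), ih, sum_Icc_succ_top (by omega), add_assoc,
      add_comm (b + 1) a, ← add_assoc a b 1]

theorem Monotone.sum_Icc_one_add_le {M : Type*} [AddCommMonoid M] [PartialOrder M]
    [IsOrderedAddMonoid M] {g : ℕ → M} (hg : Monotone g) (a b : ℕ) :
    ∑ j ∈ Icc 1 (a + b), g j ≤ ∑ j ∈ Icc 1 a, g (j + b) + ∑ j ∈ Icc 1 b, g (j + a) := by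
  rw [sum_Icc_one_add]
  gcongr with j
  exact hg (Nat.le_add_right j b)

theorem stmt5_general {ε : Type*} (E : Finset ε) (f : ε → ℕ → ℝ)
    (hmono : ∀ e ∈ E, Monotone (f e))
    (nE a b : ε → ℕ) (hsplit : ∀ e ∈ E, nE e = a e + b e) :
    (∑ e ∈ E, ∑ j ∈ Finset.Icc 1 (nE e), f e j) ≤
      (∑ e ∈ E, ∑ j ∈ Finset.Icc 1 (a e), f e (j + b e)) +
      (∑ e ∈ E, ∑ j ∈ Finset.Icc 1 (b e), f e (j + a e)) := by
  rw [← sum_add_distrib]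
  refine sum_le_sum fun e he => ?_
  rw [hsplit e he]
  exact (hmono e he).sum_Icc_one_add_le (a e) (b e)

theorem stmt5 {ε : Type*} (E : Finset ε) (f : ε → ℕ → ℝ)
    (hnonneg : ∀ e ∈ E, ∀ x, 0 ≤ f e x)
    (hmono : ∀ e ∈ E, Monotone (f e))
    (nE a b : ε → ℕ) (hsplit : ∀ e ∈ E, nE e = a e + b e) :
    (∑ e ∈ E, ∑ j ∈ Finset.Icc 1 (nE e), f e j) ≤
      (∑ e ∈ E, ∑ j ∈ Finset.Icc 1 (a e), f e (j + b e)) +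
      (∑ e ∈ E, ∑ j ∈ Finset.Icc 1 (b e), f e (j + a e)) :=
  stmt5_general E f hmono nE a b hsplit
end

section
/- Consider a congestion game with linear latency functions f_e(x) = a_{e,1}x + a_{e,0} with a_{e,1}, a_{e,0} ≥ 0. Let q ∈ [1,2) and let S be a q-approximate pure Nash equilibrium. Then Φ(S) ≤ (2q/(2−q)) · Φ(S*), where S* is a state minimizing Rosenthal's potential Φ. -/
/-
Write `n_e` and `m_e` for the loads of `S` and `S*`. For linear latencies
`2 Φ(S) = Σ_u c_u(S) + Σ_e (a_{e,1} + a_{e,0}) n_e`. Summing the approximate-equilibrium condition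
over the deviations `u ↦ S*_u` bounds the total cost by `q Σ_e m_e f_e(n_e + 1)`. The elementary
inequality `2mn + n ≤ 2m² + n²` on naturals then gives, resource by resource,
`q m_e f_e(n_e + 1) + (a_{e,1} + a_{e,0}) n_e ≤ 2q Φ_e(S*) + q Φ_e(S)`. Hence
`2 Φ(S) ≤ 2q Φ(S*) + q Φ(S)`, which rearranges to the claim since `q < 2`.
-/

open Finset

/-- Number of players using resource `e` at state `S`. -/
def congCount {ι ε : Type*} [Fintype ι] [DecidableEq ε]
    (S : ι → Finset ε) (e : ε) : ℕ :=
  (Finset.univ.filter fun u => e ∈ S u).card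

/-- Cost of player `u` at state `S` in a congestion game with linear latencies. -/
def linCost {ι ε : Type*} [Fintype ι] [DecidableEq ε]
    (a1 a0 : ε → ℝ) (S : ι → Finset ε) (u : ι) : ℝ :=
  ∑ e ∈ S u, (a1 e * (congCount S e : ℝ) + a0 e)

/-- Rosenthal's potential for linear latencies. -/
def linPot {ι ε : Type*} [Fintype ι] [Fintype ε] [DecidableEq ε]
    (a1 a0 : ε → ℝ) (S : ι → Finset ε) : ℝ :=
  ∑ e : ε, ∑ j ∈ Finset.Icc 1 (congCount S e), (a1 e * (j : ℝ) + a0 e)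

lemma two_mul_mul_add_le_two_mul_sq_add_sq (m n : ℕ) : 2 * m * n + n ≤ 2 * m ^ 2 + n ^ 2 := by
  rcases le_or_gt n m with h | h
  · nlinarith [Nat.le_mul_self n]
  · obtain ⟨k, rfl⟩ := Nat.exists_eq_add_of_lt h
    nlinarith [Nat.le_mul_self m]

lemma sum_Icc_linear (a b : ℝ) (k : ℕ) :
    ∑ j ∈ Icc 1 k, (a * j + b) = a * (k * (k + 1) / 2) + b * k := by
  induction k with
  | zero => simp
  | succ k ih =>
    rw [sum_Icc_succ_top (by omega), ih]
    push_cast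
    ring

lemma linear_resource_bound {a b q : ℝ} (ha : 0 ≤ a) (hb : 0 ≤ b) (hq : 1 ≤ q) (m n : ℕ) :
    q * (m * (a * (n + 1) + b)) + (a + b) * n ≤
      2 * q * ∑ j ∈ Icc 1 m, (a * j + b) + q * ∑ j ∈ Icc 1 n, (a * j + b) := by
  rw [sum_Icc_linear, sum_Icc_linear]
  have hmn : (2 * m * n + n : ℝ) ≤ 2 * m ^ 2 + n ^ 2 := by
    exact_mod_cast two_mul_mul_add_le_two_mul_sq_add_sq m n
  have hm : (0 : ℝ) ≤ m := m.cast_nonneg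
  have hn : (0 : ℝ) ≤ n := n.cast_nonneg
  have hlin : q * (m * (n + 1)) + n ≤ q * (m * (m + 1)) + q * (n * (n + 1) / 2) := by
    nlinarith [mul_le_mul_of_nonneg_left hmn (by linarith : (0 : ℝ) ≤ q)]
  have hconst : q * m + n ≤ 2 * q * m + q * n := by nlinarith
  nlinarith [mul_le_mul_of_nonneg_left hlin ha, mul_le_mul_of_nonneg_left hconst hb]

section

variable {ι ε : Type*} [Fintype ι] [DecidableEq ε]

lemma congCount_update_le [DecidableEq ι] (S : ι → Finset ε) (u : ι) (s' : Finset ε) (e : ε) :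
    congCount (Function.update S u s') e ≤ congCount S e + 1 := by
  calc congCount (Function.update S u s') e
      ≤ (insert u (univ.filter fun v => e ∈ S v)).card := by
        refine card_le_card fun v hv => ?_
        rcases eq_or_ne v u with rfl | hvu
        · exact mem_insert_self _ _
        · simp_all
    _ ≤ congCount S e + 1 := card_insert_le _ _

lemma sum_sum_mem_eq_sum_congCount_mul [Fintype ε] (S : ι → Finset ε) (g : ε → ℝ) :
    ∑ u, ∑ e ∈ S u, g e = ∑ e, (congCount S e : ℝ) * g e := by
  rw [sum_comm' (t' := univ) (s' := fun e => univ.filter fun u => e ∈ S u) (by simp)]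
  simp [congCount]

variable {a1 a0 : ε → ℝ}

lemma linCost_update_le [DecidableEq ι] (h1 : ∀ e, 0 ≤ a1 e) (S : ι → Finset ε) (u : ι)
    (s' : Finset ε) :
    linCost a1 a0 (Function.update S u s') u ≤
      ∑ e ∈ s', (a1 e * ((congCount S e : ℝ) + 1) + a0 e) := by
  rw [linCost, Function.update_self]
  gcongr with e
  · exact h1 e
  · exact_mod_cast congCount_update_le S u s' e

lemma sum_linCost_eq [Fintype ε] (S : ι → Finset ε) :
    ∑ u, linCost a1 a0 S u = ∑ e, (congCount S e : ℝ) * (a1 e * congCount S e + a0 e) :=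
  sum_sum_mem_eq_sum_congCount_mul S _

lemma two_mul_linPot_eq [Fintype ε] (S : ι → Finset ε) :
    2 * linPot a1 a0 S = ∑ u, linCost a1 a0 S u + ∑ e, (a1 e + a0 e) * congCount S e := by
  rw [sum_linCost_eq, linPot, mul_sum, ← sum_add_distrib]
  refine sum_congr rfl fun e _ => ?_
  rw [sum_Icc_linear]
  ring

lemma sum_linCost_le_of_approx [DecidableEq ι] [Fintype ε] (h1 : ∀ e, 0 ≤ a1 e) {q : ℝ}
    (hq : 0 ≤ q) (S T : ι → Finset ε)
    (happrox : ∀ u, linCost a1 a0 S u ≤ q * linCost a1 a0 (Function.update S u (T u)) u) :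
    ∑ u, linCost a1 a0 S u ≤
      q * ∑ e, (congCount T e : ℝ) * (a1 e * ((congCount S e : ℝ) + 1) + a0 e) := by
  rw [← sum_sum_mem_eq_sum_congCount_mul, mul_sum]
  exact sum_le_sum fun u _ =>
    (happrox u).trans (mul_le_mul_of_nonneg_left (linCost_update_le h1 S u (T u)) hq)

lemma two_mul_linPot_le_of_approx [DecidableEq ι] [Fintype ε] (h1 : ∀ e, 0 ≤ a1 e)
    (h0 : ∀ e, 0 ≤ a0 e) {q : ℝ} (hq : 1 ≤ q) (S T : ι → Finset ε)
    (happrox : ∀ u, linCost a1 a0 S u ≤ q * linCost a1 a0 (Function.update S u (T u)) u) :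
    2 * linPot a1 a0 S ≤ 2 * q * linPot a1 a0 T + q * linPot a1 a0 S := by
  have hcost := sum_linCost_le_of_approx h1 (by linarith) S T happrox
  have hres : q * ∑ e, (congCount T e : ℝ) * (a1 e * ((congCount S e : ℝ) + 1) + a0 e) +
      ∑ e, (a1 e + a0 e) * congCount S e ≤ 2 * q * linPot a1 a0 T + q * linPot a1 a0 S := by
    rw [linPot, linPot, mul_sum, mul_sum, mul_sum, ← sum_add_distrib, ← sum_add_distrib]
    exact sum_le_sum fun e _ => linear_resource_bound (h1 e) (h0 e) hq _ _
  linarith [two_mul_linPot_eq (a1 := a1) (a0 := a0) S]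

end

theorem stmt7_general {ι ε : Type*} [Fintype ι] [Fintype ε] [DecidableEq ι] [DecidableEq ε]
    (Strat : ι → Finset (Finset ε)) (a1 a0 : ε → ℝ)
    (h1 : ∀ e, 0 ≤ a1 e) (h0 : ∀ e, 0 ≤ a0 e)
    (q : ℝ) (hq1 : 1 ≤ q) (hq2 : q < 2)
    (S Sstar : ι → Finset ε)
    (hSstar : ∀ u, Sstar u ∈ Strat u)
    (happrox : ∀ u, ∀ s' ∈ Strat u,
      linCost a1 a0 S u ≤ q * linCost a1 a0 (Function.update S u s') u) :
    linPot a1 a0 S ≤ (2 * q / (2 - q)) * linPot a1 a0 Sstar := by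
  have hpot := two_mul_linPot_le_of_approx h1 h0 hq1 S Sstar
    fun u => happrox u (Sstar u) (hSstar u)
  rw [div_mul_eq_mul_div, le_div_iff₀ (by linarith)]
  linarith

theorem stmt7 {ι ε : Type*} [Fintype ι] [Fintype ε] [DecidableEq ι] [DecidableEq ε]
    (Strat : ι → Finset (Finset ε)) (a1 a0 : ε → ℝ)
    (h1 : ∀ e, 0 ≤ a1 e) (h0 : ∀ e, 0 ≤ a0 e)
    (q : ℝ) (hq1 : 1 ≤ q) (hq2 : q < 2)
    (S Sstar : ι → Finset ε)
    (hS : ∀ u, S u ∈ Strat u) (hSstar : ∀ u, Sstar u ∈ Strat u)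
    (happrox : ∀ u, ∀ s' ∈ Strat u,
      linCost a1 a0 S u ≤ q * linCost a1 a0 (Function.update S u s') u)
    (hmin : ∀ T : ι → Finset ε, (∀ u, T u ∈ Strat u) →
      linPot a1 a0 Sstar ≤ linPot a1 a0 T) :
    linPot a1 a0 S ≤ (2 * q / (2 - q)) * linPot a1 a0 Sstar :=
  stmt7_general Strat a1 a0 h1 h0 q hq1 hq2 S Sstar hSstar happrox
end

section
/- Rosenthal's potential Φ(S) = Σ_{e∈E} Σ_{j=1}^{n_e(S)} f_e(j) is an exact potential for congestion games: for every state S, player u, and strategy s'_u ∈ Σ_u, Φ(S_{−u}, s'_u) − Φ(S) = c_u(S_{−u}, s'_u) − c_u(S). -/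
/-
Idea: the potential splits as `Φ(S) = Φ(S_{-u}, ∅) + c_u(S)`. Indeed, `u` adds one to the
congestion of each resource `e ∈ s_u`, which appends the single summand `f_e(n_e(S))` to the
inner sum of `Φ` at `e`, and these summands add up to `c_u(S)`. The first term does not depend
on the strategy of `u`, so it cancels in `Φ(S_{-u}, s'_u) - Φ(S)`.
-/

open Finset

/-- Cost of player `u` at state `S`. -/
def playerCost {ι ε : Type*} [Fintype ι] [DecidableEq ε]
    (f : ε → ℕ → ℝ) (S : ι → Finset ε) (u : ι) : ℝ :=
  ∑ e ∈ S u, f e (congCount S e)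

/-- Rosenthal's potential. -/
def rosenthalPot {ι ε : Type*} [Fintype ι] [Fintype ε] [DecidableEq ε]
    (f : ε → ℕ → ℝ) (S : ι → Finset ε) : ℝ :=
  ∑ e : ε, ∑ j ∈ Finset.Icc 1 (congCount S e), f e j

lemma sum_Icc_add_ite_one {M : Type*} [AddCommMonoid M] (g : ℕ → M) (m : ℕ) (p : Prop)
    [Decidable p] :
    ∑ j ∈ Icc 1 (m + if p then 1 else 0), g j = ∑ j ∈ Icc 1 m, g j + if p then g (m + 1) else 0 := by
  split_ifs
  · exact sum_Icc_succ_top (Nat.le_add_left 1 m) g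
  · simp

section CongestionGame

variable {ι ε : Type*} [Fintype ι] [DecidableEq ι] [DecidableEq ε]

lemma congCount_eq_congCount_update_empty_add (S : ι → Finset ε) (u : ι) (e : ε) :
    congCount S e = congCount (Function.update S u ∅) e + if e ∈ S u then 1 else 0 := by
  simp only [congCount, card_filter]
  rw [Fintype.sum_eq_add_sum_compl u, Fintype.sum_eq_add_sum_compl u (f := fun v => _),
    Function.update_self, if_neg (notMem_empty e), zero_add, add_comm]
  congr 1
  refine sum_congr rfl fun v hv => ?_
  rw [Function.update_of_ne (by simpa using hv)]

lemma rosenthalPot_eq_rosenthalPot_update_empty_add_playerCost [Fintype ε]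
    (f : ε → ℕ → ℝ) (S : ι → Finset ε) (u : ι) :
    rosenthalPot f S = rosenthalPot f (Function.update S u ∅) + playerCost f S u := by
  have hcost : playerCost f S u =
      ∑ e, if e ∈ S u then f e (congCount (Function.update S u ∅) e + 1) else 0 := by
    rw [sum_ite_mem, univ_inter, playerCost]
    refine sum_congr rfl fun e he => ?_
    rw [congCount_eq_congCount_update_empty_add S u e, if_pos he]
  simp only [rosenthalPot, hcost, ← sum_add_distrib]
  refine sum_congr rfl fun e _ => ?_
  rw [congCount_eq_congCount_update_empty_add S u e, sum_Icc_add_ite_one]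

end CongestionGame

theorem stmt15 {ι ε : Type*} [Fintype ι] [Fintype ε] [DecidableEq ι] [DecidableEq ε]
    (f : ε → ℕ → ℝ) (S : ι → Finset ε) (u : ι) (s' : Finset ε) :
    rosenthalPot f (Function.update S u s') - rosenthalPot f S =
      playerCost f (Function.update S u s') u - playerCost f S u := by
  rw [rosenthalPot_eq_rosenthalPot_update_empty_add_playerCost f S u,
    rosenthalPot_eq_rosenthalPot_update_empty_add_playerCost f (Function.update S u s') u,
    Function.update_idem]
  ring
end
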